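/- arXiv:2109.02600 — 7 statements merged into one kernel-verified Lean document; each statement's English description precedes it below -/
import Mathlib

section
/- Assume the Ball–Carlen–Lieb inequality: for all matrices Z, W ∈ C^{N×N} with Tr[|Z|^{p-1}ZW†] = Tr[|Z|^{p-1}WZ†] = 0 one has ‖Z+W‖_p^2 ≥ ‖Z‖_p^2 + (p-1)‖W‖_p^2, for p ∈ [1,2]. Then for matrices Z_0,…,Z_{r-1} with Tr[|Z_j|^{p-1} Z_j Z_k†] = Tr[|Z_j|^{p-1} Z_k Z_j†] = 0 for all j ≠ k, the inequality ‖∑_{j=0}^{r-1} Z_j‖_p^2 ≥ ‖Z_0‖_p^2 + ζ_r(p) ∑_{j=1}^{r-1} ‖Z_j‖_p^2 holds, where ζ_r(p) = (p-1)(1-(p-1)^{r-1})/((r-1)(2-p)). -/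
open Matrix

/-- The Schatten `p`-norm of a complex `d × d` matrix. -/
noncomputable def schattenNorm {d : ℕ} (p : ℝ) (A : Matrix (Fin d) (Fin d) ℂ) : ℝ :=
  (∑ i, ((Matrix.isHermitian_conjTranspose_mul_self A).eigenvalues i) ^ (p / 2)) ^ (1 / p)

/-- Real power of a Hermitian matrix, via the spectral decomposition. -/
noncomputable def hermRpow {d : ℕ} (A : Matrix (Fin d) (Fin d) ℂ) (hA : A.IsHermitian)
    (t : ℝ) : Matrix (Fin d) (Fin d) ℂ :=
  (hA.eigenvectorUnitary : Matrix (Fin d) (Fin d) ℂ) *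
    Matrix.diagonal (fun i => ((hA.eigenvalues i ^ t : ℝ) : ℂ)) *
      (hA.eigenvectorUnitary : Matrix (Fin d) (Fin d) ℂ)ᴴ

/-- `|Z|^t := (Z Zᴴ)^{t/2}`, defined through the spectral decomposition of `Z Zᴴ`. -/
noncomputable def absRpow {d : ℕ} (Z : Matrix (Fin d) (Fin d) ℂ) (t : ℝ) :
    Matrix (Fin d) (Fin d) ℂ :=
  hermRpow (Z * Zᴴ) (Matrix.isHermitian_mul_conjTranspose_self Z) (t / 2)

/-- The constant `ζ_r(p)`. -/
noncomputable def zetaConst (r : ℕ) (p : ℝ) : ℝ :=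
  if p = 2 then 1 else (p - 1) * (1 - (p - 1) ^ (r - 1)) / (((r : ℝ) - 1) * (2 - p))

/-!
Applying the two-term inequality `q (x + y) ≥ q x + c q y` with `x` the first summand and `y`
the sum of the remaining ones, and iterating, gives `q (∑ Zⱼ) ≥ ∑ⱼ cʲ q (Zⱼ)` for every ordering
of the summands. Keeping `Z₀` first and averaging over the `r - 1` cyclic orderings of the others
gives every `Zⱼ` with `j ≠ 0` the weight `(c + ⋯ + c^{r-1}) / (r - 1)`, which for `c = p - 1`
is `ζ_r(p)`.
-/

open Finset

section Chain

variable {M : Type*} [AddCommMonoid M] (q : M → ℝ) (orth : M → AddSubmonoid M) {c : ℝ}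

theorem sum_pow_mul_le_of_pairwise (hc : 0 ≤ c) (hq0 : 0 ≤ q 0)
    (hq : ∀ x, ∀ y ∈ orth x, q x + c * q y ≤ q (x + y)) :
    ∀ {m : ℕ} (g : Fin m → M), Pairwise (fun i k => g k ∈ orth (g i)) →
      ∑ i : Fin m, c ^ (i : ℕ) * q (g i) ≤ q (∑ i, g i)
  | 0, _, _ => by simpa using hq0
  | m + 1, g, hg => by
    have hrest : ∑ i : Fin m, g i.succ ∈ orth (g 0) :=
      AddSubmonoid.sum_mem _ fun i _ => hg (Fin.succ_ne_zero i).symm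
    have ih := sum_pow_mul_le_of_pairwise hc hq0 hq (fun i => g i.succ)
      (hg.comp_of_injective (Fin.succ_injective m))
    calc ∑ i : Fin (m + 1), c ^ (i : ℕ) * q (g i)
        = q (g 0) + c * ∑ i : Fin m, c ^ (i : ℕ) * q (g i.succ) := by
          simp only [Fin.sum_univ_succ, Fin.val_zero, pow_zero, one_mul, Fin.val_succ, pow_succ,
            mul_sum]
          ring_nf
      _ ≤ q (g 0) + c * q (∑ i : Fin m, g i.succ) := by gcongr
      _ ≤ q (∑ i, g i) := by rw [Fin.sum_univ_succ]; exact hq _ _ hrest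

theorem add_sum_pow_succ_mul_comp_perm_le (hc : 0 ≤ c) (hq0 : 0 ≤ q 0)
    (hq : ∀ x, ∀ y ∈ orth x, q x + c * q y ≤ q (x + y))
    {m : ℕ} (g : Fin (m + 1) → M) (hg : Pairwise (fun i k => g k ∈ orth (g i)))
    (σ : Equiv.Perm (Fin m)) :
    q (g 0) + ∑ i : Fin m, c ^ ((i : ℕ) + 1) * q (g (σ i).succ) ≤ q (∑ i, g i) := by
  set τ : Equiv.Perm (Fin (m + 1)) := Equiv.Perm.decomposeFin.symm (0, σ)
  have h := sum_pow_mul_le_of_pairwise q orth hc hq0 hq (g ∘ τ)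
    (hg.comp_of_injective τ.injective)
  simpa [τ, Fin.sum_univ_succ, Equiv.sum_comp] using h

theorem cyclic_average_le_of_pairwise (hc : 0 ≤ c) (hq0 : 0 ≤ q 0)
    (hq : ∀ x, ∀ y ∈ orth x, q x + c * q y ≤ q (x + y))
    {m : ℕ} [NeZero m] (g : Fin (m + 1) → M) (hg : Pairwise (fun i k => g k ∈ orth (g i))) :
    m * q (g 0) + (∑ i ∈ range m, c ^ (i + 1)) * ∑ j : Fin m, q (g j.succ)
      ≤ m * q (∑ i, g i) := by
  have hshift (i : Fin m) : ∑ s : Fin m, q (g (i + s).succ) = ∑ j : Fin m, q (g j.succ) :=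
    Equiv.sum_comp (Equiv.addLeft i) fun j => q (g j.succ)
  calc m * q (g 0) + (∑ i ∈ range m, c ^ (i + 1)) * ∑ j : Fin m, q (g j.succ)
      = ∑ s : Fin m, (q (g 0) + ∑ i : Fin m, c ^ ((i : ℕ) + 1) * q (g (i + s).succ)) := by
        simp only [sum_add_distrib, sum_const, card_univ, Fintype.card_fin, nsmul_eq_mul,
          sum_mul]
        rw [sum_comm]
        simp only [← mul_sum, hshift]
        rw [Fin.sum_univ_eq_sum_range (fun i => c ^ (i + 1) * ∑ j : Fin m, q (g j.succ))]
    _ ≤ ∑ _s : Fin m, q (∑ i, g i) :=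
        sum_le_sum fun s _ => add_sum_pow_succ_mul_comp_perm_le q orth hc hq0 hq g hg (Equiv.addRight s)
    _ = m * q (∑ i, g i) := by simp

end Chain

theorem natCast_mul_zetaConst (m : ℕ) (p : ℝ) :
    m * zetaConst (m + 1) p = ∑ i ∈ range m, (p - 1) ^ (i + 1) := by
  unfold zetaConst
  split_ifs with hp
  · norm_num [hp]
  rcases eq_or_ne m 0 with rfl | hm
  · simp
  have h2 : (2 : ℝ) - p ≠ 0 := sub_ne_zero.mpr (Ne.symm hp)
  have h1 : p - 1 ≠ 1 := fun h => hp (by linarith)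
  simp only [pow_succ, ← sum_mul, geom_sum_eq h1, Nat.add_sub_cancel, Nat.cast_add,
    Nat.cast_one, add_sub_cancel_right]
  field_simp
  ring

def bclOrthogonal {N : ℕ} (p : ℝ) (Z : Matrix (Fin N) (Fin N) ℂ) :
    AddSubmonoid (Matrix (Fin N) (Fin N) ℂ) where
  carrier := {W | (absRpow Z (p - 1) * Z * Wᴴ).trace = 0 ∧
    (absRpow Z (p - 1) * W * Zᴴ).trace = 0}
  zero_mem' := by simp
  add_mem' := by
    rintro W W' ⟨hW₁, hW₂⟩ ⟨hW'₁, hW'₂⟩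
    simp [mul_add, add_mul, hW₁, hW₂, hW'₁, hW'₂]

/-- Assuming the Ball–Carlen–Lieb inequality (for `Z, W` with
`Tr[|Z|^{p-1} Z Wᴴ] = Tr[|Z|^{p-1} W Zᴴ] = 0` one has
`‖Z+W‖_p² ≥ ‖Z‖_p² + (p-1)‖W‖_p²`), for matrices `Z_0, …, Z_{r-1}` with
`Tr[|Z_j|^{p-1} Z_j Z_kᴴ] = Tr[|Z_j|^{p-1} Z_k Z_jᴴ] = 0` for all `j ≠ k` one has
`‖∑_j Z_j‖_p² ≥ ‖Z_0‖_p² + ζ_r(p) ∑_{j≠0} ‖Z_j‖_p²`. -/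
theorem iterated_ball_carlen_lieb {N : ℕ} (r : ℕ) (hr : 2 ≤ r)
    (p : ℝ) (hp1 : 1 ≤ p)
    (BCL : ∀ Z W : Matrix (Fin N) (Fin N) ℂ,
      (absRpow Z (p - 1) * Z * Wᴴ).trace = 0 →
      (absRpow Z (p - 1) * W * Zᴴ).trace = 0 →
      schattenNorm p (Z + W) ^ 2 ≥ schattenNorm p Z ^ 2 + (p - 1) * schattenNorm p W ^ 2)
    (Z : Fin r → Matrix (Fin N) (Fin N) ℂ)
    (horth : ∀ j k : Fin r, j ≠ k →
      (absRpow (Z j) (p - 1) * Z j * (Z k)ᴴ).trace = 0 ∧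
      (absRpow (Z j) (p - 1) * Z k * (Z j)ᴴ).trace = 0) :
    schattenNorm p (∑ j : Fin r, Z j) ^ 2
      ≥ schattenNorm p (Z ⟨0, by omega⟩) ^ 2
        + zetaConst r p * ∑ j ∈ Finset.univ.filter (fun j : Fin r => j.val ≠ 0),
            schattenNorm p (Z j) ^ 2 := by
  obtain ⟨m, rfl⟩ : ∃ m, r = m + 1 := ⟨r - 1, by omega⟩
  have : NeZero m := ⟨by omega⟩
  have hm : (0 : ℝ) < m := by simp [Nat.pos_of_ne_zero (NeZero.ne m)]
  have havg := cyclic_average_le_of_pairwise (fun A => schattenNorm p A ^ 2) (bclOrthogonal p)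
    (sub_nonneg.mpr hp1) (sq_nonneg _) (fun A B hB => BCL A B hB.1 hB.2) Z horth
  rw [← natCast_mul_zetaConst, mul_assoc, ← mul_add] at havg
  simpa [sum_filter, Fin.sum_univ_succ] using le_of_mul_le_mul_left havg hm
end

section
/- Let r ≥ 2, p ∈ [1,2], and f : (Z_r)^n → C^{m×m}, with Fourier coefficients f̂(S) = r^{-n} ∑_{x ∈ Z_r^n} f(x) ω^{-S·x} where ω = e^{2πi/r} and S·x = ∑_i S_i x_i mod r. Assuming the one-variable inequality (∑_{S ∈ Z_r} ζ^{|S|} ‖ĥ(S)‖_p^2 ≤ ((1/r) ∑_{x∈Z_r} ‖h(x)‖_p^p)^{2/p} for every h : Z_r → C^{m×m}, where ζ = ζ_r(p)), one has for all n: ∑_{S ∈ Z_r^n} ζ^{|S|} ‖f̂(S)‖_p^2 ≤ (r^{-n} ∑_{x ∈ Z_r^n} ‖f(x)‖_p^p)^{2/p}, where |S| = |{i : S_i ≠ 0}|. -/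
open Matrix

/-- Fourier coefficient of a matrix-valued function on `(ℤ_r)^n`:
`f̂(S) = r^{-n} ∑_x f(x) ω^{-S·x}` with `ω = e^{2πi/r}`. -/
noncomputable def matFourier {r m n : ℕ} [NeZero r]
    (f : (Fin n → ZMod r) → Matrix (Fin m) (Fin m) ℂ) (S : Fin n → ZMod r) :
    Matrix (Fin m) (Fin m) ℂ :=
  (((r : ℂ) ^ n)⁻¹) •
    ∑ x : Fin n → ZMod r,
      (Complex.exp (2 * Real.pi * Complex.I / r) ^ (∑ i, (S i).val * (x i).val))⁻¹ • f x

/-- Hamming weight `|S| = |{i : S_i ≠ 0}|` of `S ∈ (ℤ_r)^n`. -/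
def hammingWt {r n : ℕ} [NeZero r] (S : Fin n → ZMod r) : ℕ :=
  (Finset.univ.filter fun i => S i ≠ 0).card

/-! Induction on `n`, splitting off the first coordinate: with `g_y = f(y, ·)`, `f̂(s, S')` is
the one-variable transform at `s` of `y ↦ ĝ_y(S')`. For each `S'` the one-variable inequality
bounds the sum over `s` by an `ℓ^p`-average over `y`; Minkowski's inequality in `ℓ^{2/p}` (this
is where `p ≤ 2` enters) moves the weighted sum over `S'` inside the average over `y`, and there
the induction hypothesis applies to each slice `g_y`. -/

lemma schattenNorm_nonneg {d : ℕ} (p : ℝ) (A : Matrix (Fin d) (Fin d) ℂ) :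
    0 ≤ schattenNorm p A :=
  Real.rpow_nonneg (Finset.sum_nonneg fun i _ =>
    Real.rpow_nonneg (Matrix.eigenvalues_conjTranspose_mul_self_nonneg A i) _) _

lemma zetaConst_nonneg (r : ℕ) [NeZero r] {p : ℝ} (hp1 : 1 ≤ p) : 0 ≤ zetaConst r p := by
  unfold zetaConst
  split_ifs with hp2
  · exact zero_le_one
  have hr : (1 : ℝ) ≤ r := by exact_mod_cast NeZero.one_le
  rcases lt_or_gt_of_ne hp2 with hp2 | hp2
  · have : (p - 1) ^ (r - 1) ≤ 1 := pow_le_one₀ (by linarith) (by linarith)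
    exact div_nonneg (mul_nonneg (by linarith) (by linarith))
      (mul_nonneg (by linarith) (by linarith))
  · have : 1 ≤ (p - 1) ^ (r - 1) := one_le_pow₀ (by linarith)
    exact div_nonneg_of_nonpos (mul_nonpos_of_nonneg_of_nonpos (by linarith) (by linarith))
      (mul_nonpos_of_nonneg_of_nonpos (by linarith) (by linarith))

lemma Fintype.sum_pi_fin_succ {α β : Type*} [Fintype α] [AddCommMonoid β] {n : ℕ}
    (g : (Fin (n + 1) → α) → β) : ∑ z, g z = ∑ y, ∑ x, g (Fin.cons y x) := by
  rw [← (Fin.consEquiv fun _ => α).sum_comp, Fintype.sum_prod_type]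
  rfl

lemma Fintype.sum_pi_fin_one {α β : Type*} [Fintype α] [AddCommMonoid β]
    (g : (Fin 1 → α) → β) : ∑ v, g v = ∑ y, g (fun _ => y) :=
  ((Equiv.funUnique (Fin 1) α).symm.sum_comp g).symm

theorem Real.Lp_sum_le {ι κ : Type*} [Fintype ι] (s : Finset κ) {q : ℝ} (hq : 1 ≤ q)
    (u : κ → ι → ℝ) :
    (∑ i, |∑ k ∈ s, u k i| ^ q) ^ (1 / q) ≤ ∑ k ∈ s, (∑ i, |u k i| ^ q) ^ (1 / q) := by
  have : Fact (1 ≤ ENNReal.ofReal q) := ⟨by simpa using ENNReal.ofReal_le_ofReal hq⟩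
  have hq' : 0 < (ENNReal.ofReal q).toReal := by
    rw [ENNReal.toReal_ofReal (by linarith)]; linarith
  have h := norm_sum_le (E := PiLp (ENNReal.ofReal q) (fun _ : ι => ℝ)) s
    (fun k => WithLp.toLp _ (u k))
  simp only [PiLp.norm_eq_sum hq', ← WithLp.toLp_sum, Real.norm_eq_abs,
    ENNReal.toReal_ofReal (by linarith : 0 ≤ q)] at h
  simpa using h

/-- Minkowski's inequality in `ℓ^{2/p}` applied to `u i k = c k ^ (p/2) * w i * a k i ^ p`. -/
theorem Real.weighted_L2_Lp_le_Lp_L2 {ι κ : Type*} [Fintype ι] [Fintype κ] {p : ℝ} (hp0 : 0 < p)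
    (hp2 : p ≤ 2) {w : ι → ℝ} {c : κ → ℝ} {a : κ → ι → ℝ} (hw : ∀ i, 0 ≤ w i)
    (hc : ∀ k, 0 ≤ c k) (ha : ∀ k i, 0 ≤ a k i) :
    ∑ k, c k * (∑ i, w i * a k i ^ p) ^ (2 / p) ≤
      (∑ i, w i * (∑ k, c k * a k i ^ 2) ^ (p / 2)) ^ (2 / p) := by
  set q := 2 / p
  have hq : 1 ≤ q := by rw [le_div_iff₀ hp0]; linarith
  have hq0 : q ≠ 0 := by positivity
  have hinv : 1 / q = p / 2 := one_div_div 2 p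
  have cancel : ∀ {x : ℝ}, 0 ≤ x → (x ^ (p / 2)) ^ q = x := fun hx => by
    rw [← rpow_mul hx, ← hinv, one_div_mul_cancel hq0, rpow_one]
  set u : ι → κ → ℝ := fun i k => c k ^ (p / 2) * (w i * a k i ^ p)
  have hu : ∀ i k, 0 ≤ u i k := fun i k => by
    have := ha k i; have := hw i; have := hc k; positivity
  have outer : ∀ k, c k * (∑ i, w i * a k i ^ p) ^ q = |∑ i, u i k| ^ q := fun k => by
    rw [abs_of_nonneg (Finset.sum_nonneg fun i _ => hu i k), ← Finset.mul_sum,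
      mul_rpow (by have := hc k; positivity) (Finset.sum_nonneg fun i _ => by
        have := ha k i; have := hw i; positivity), cancel (hc k)]
  have inner : ∀ i, (∑ k, |u i k| ^ q) ^ (1 / q) = w i * (∑ k, c k * a k i ^ 2) ^ (p / 2) :=
    fun i => by
    have hk : ∀ k, |u i k| ^ q = w i ^ q * (c k * a k i ^ 2) := fun k => by
      have hpq : p * q = 2 := mul_div_cancel₀ 2 hp0.ne'
      rw [abs_of_nonneg (hu i k), mul_rpow (by have := hc k; positivity) (by
          have := ha k i; have := hw i; positivity), cancel (hc k),
        mul_rpow (hw i) (rpow_nonneg (ha k i) _), ← rpow_mul (ha k i), hpq, rpow_two]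
      ring
    have hX : 0 ≤ ∑ k, c k * a k i ^ 2 := Finset.sum_nonneg fun k _ => by
      have := hc k; positivity
    rw [Finset.sum_congr rfl fun k _ => hk k, ← Finset.mul_sum,
      mul_rpow (rpow_nonneg (hw i) _) hX, one_div q, rpow_rpow_inv (hw i) hq0, ← one_div, hinv]
  calc ∑ k, c k * (∑ i, w i * a k i ^ p) ^ q
      = ((∑ k, |∑ i, u i k| ^ q) ^ (1 / q)) ^ q := by
        rw [Finset.sum_congr rfl fun k _ => outer k, hinv, cancel
          (Finset.sum_nonneg fun k _ => by positivity)]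
    _ ≤ (∑ i, w i * (∑ k, c k * a k i ^ 2) ^ (p / 2)) ^ q := by
        rw [← Finset.sum_congr rfl fun i _ => inner i]
        gcongr
        exact Real.Lp_sum_le _ hq u

section Fourier

variable {r m n : ℕ} [NeZero r]

lemma hammingWt_cons (s : ZMod r) (S : Fin n → ZMod r) :
    hammingWt (Fin.cons s S : Fin (n + 1) → ZMod r) =
      hammingWt (fun _ : Fin 1 => s) + hammingWt S := by
  simp only [hammingWt, Finset.card_filter, Fin.sum_univ_succ, Fin.cons_zero, Fin.cons_succ,
    Finset.univ_unique, Finset.sum_singleton]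

lemma matFourier_fin_zero (f : (Fin 0 → ZMod r) → Matrix (Fin m) (Fin m) ℂ)
    (S : Fin 0 → ZMod r) : matFourier f S = f S := by
  simp [matFourier, Subsingleton.elim _ S]

lemma matFourier_cons (f : (Fin (n + 1) → ZMod r) → Matrix (Fin m) (Fin m) ℂ) (s : ZMod r)
    (S : Fin n → ZMod r) :
    matFourier f (Fin.cons s S) =
      matFourier (fun v : Fin 1 → ZMod r => matFourier (fun x => f (Fin.cons (v 0) x)) S)
        (fun _ => s) := by
  simp only [matFourier]
  rw [Fintype.sum_pi_fin_one, Fintype.sum_pi_fin_succ]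
  simp only [Finset.smul_sum, smul_smul]
  refine Finset.sum_congr rfl fun y _ => Finset.sum_congr rfl fun x _ => ?_
  congr 1
  simp [Fin.sum_univ_succ, pow_add, pow_succ]
  ring

variable (ζ p : ℝ)

noncomputable def fourierMass (f : (Fin n → ZMod r) → Matrix (Fin m) (Fin m) ℂ) : ℝ :=
  ∑ S, ζ ^ hammingWt S * schattenNorm p (matFourier f S) ^ 2

noncomputable def powerMean (f : (Fin n → ZMod r) → Matrix (Fin m) (Fin m) ℂ) : ℝ :=
  ((r : ℝ) ^ n)⁻¹ * ∑ x, schattenNorm p (f x) ^ p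

lemma fourierMass_succ (f : (Fin (n + 1) → ZMod r) → Matrix (Fin m) (Fin m) ℂ) :
    fourierMass ζ p f = ∑ S, ζ ^ hammingWt S *
      fourierMass ζ p
        (fun v : Fin 1 → ZMod r => matFourier (fun x => f (Fin.cons (v 0) x)) S) := by
  simp only [fourierMass, Fintype.sum_pi_fin_succ, Fintype.sum_pi_fin_one (α := ZMod r),
    Finset.mul_sum, hammingWt_cons, matFourier_cons, pow_add]
  rw [Finset.sum_comm]
  refine Finset.sum_congr rfl fun S _ => Finset.sum_congr rfl fun s _ => ?_
  ring

lemma powerMean_nonneg (f : (Fin n → ZMod r) → Matrix (Fin m) (Fin m) ℂ) :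
    0 ≤ powerMean p f :=
  mul_nonneg (by positivity) (Finset.sum_nonneg fun x _ =>
    Real.rpow_nonneg (schattenNorm_nonneg p _) _)

lemma powerMean_succ (f : (Fin (n + 1) → ZMod r) → Matrix (Fin m) (Fin m) ℂ) :
    powerMean p f = (r : ℝ)⁻¹ * ∑ y, powerMean p (fun x => f (Fin.cons y x)) := by
  simp only [powerMean, Fintype.sum_pi_fin_succ, ← Finset.mul_sum, pow_succ, mul_inv]
  ring

lemma powerMean_fin_one (h : (Fin 1 → ZMod r) → Matrix (Fin m) (Fin m) ℂ) :
    powerMean p h = ∑ y, (r : ℝ)⁻¹ * schattenNorm p (h fun _ => y) ^ p := by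
  rw [powerMean, pow_one, Fintype.sum_pi_fin_one, Finset.mul_sum]

variable {ζ p}

lemma fourierMass_fin_zero (hp : p ≠ 0)
    (f : (Fin 0 → ZMod r) → Matrix (Fin m) (Fin m) ℂ) :
    fourierMass ζ p f = powerMean p f ^ (2 / p) := by
  simp only [fourierMass, powerMean, Fintype.sum_unique, matFourier_fin_zero, hammingWt,
    Finset.univ_eq_empty, Finset.filter_empty, Finset.card_empty, pow_zero, inv_one, one_mul]
  rw [← Real.rpow_mul (schattenNorm_nonneg p _), mul_div_cancel₀ 2 hp, Real.rpow_two]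

lemma fourierMass_le_powerMean_rpow_succ (hp0 : 0 < p) (hp2 : p ≤ 2) (hζ : 0 ≤ ζ)
    (base : ∀ h : (Fin 1 → ZMod r) → Matrix (Fin m) (Fin m) ℂ,
      fourierMass ζ p h ≤ powerMean p h ^ (2 / p))
    (ih : ∀ g : (Fin n → ZMod r) → Matrix (Fin m) (Fin m) ℂ,
      fourierMass ζ p g ≤ powerMean p g ^ (2 / p))
    (f : (Fin (n + 1) → ZMod r) → Matrix (Fin m) (Fin m) ℂ) :
    fourierMass ζ p f ≤ powerMean p f ^ (2 / p) := by
  have hr : (0 : ℝ) ≤ (r : ℝ)⁻¹ := by positivity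
  calc fourierMass ζ p f
      = ∑ S, ζ ^ hammingWt S *
          fourierMass ζ p
            (fun v : Fin 1 → ZMod r => matFourier (fun x => f (Fin.cons (v 0) x)) S) :=
        fourierMass_succ ζ p f
    _ ≤ ∑ S, ζ ^ hammingWt S *
          (∑ y, (r : ℝ)⁻¹ * schattenNorm p (matFourier (fun x => f (Fin.cons y x)) S) ^ p) ^
            (2 / p) := by
        gcongr with S
        exact (base _).trans_eq (by rw [powerMean_fin_one])
    _ ≤ (∑ y, (r : ℝ)⁻¹ * (∑ S, ζ ^ hammingWt S *
          schattenNorm p (matFourier (fun x => f (Fin.cons y x)) S) ^ 2) ^ (p / 2)) ^ (2 / p) :=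
        Real.weighted_L2_Lp_le_Lp_L2 hp0 hp2 (fun _ => hr) (fun _ => pow_nonneg hζ _)
          (fun _ _ => schattenNorm_nonneg p _)
    _ ≤ (∑ y, (r : ℝ)⁻¹ *
          (powerMean p (fun x => f (Fin.cons y x)) ^ (2 / p)) ^ (p / 2)) ^ (2 / p) := by
        gcongr with y
        exact ih _
    _ = powerMean p f ^ (2 / p) := by
        rw [powerMean_succ, Finset.mul_sum]
        congr 1
        refine Finset.sum_congr rfl fun y _ => ?_
        have : 2 / p * (p / 2) = 1 := by field_simp
        rw [← Real.rpow_mul (powerMean_nonneg p _), this, Real.rpow_one]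

end Fourier

lemma fourierMass_le_powerMean_rpow {r m : ℕ} [NeZero r] {ζ p : ℝ} (hp0 : 0 < p)
    (hp2 : p ≤ 2) (hζ : 0 ≤ ζ)
    (base : ∀ h : (Fin 1 → ZMod r) → Matrix (Fin m) (Fin m) ℂ,
      fourierMass ζ p h ≤ powerMean p h ^ (2 / p)) :
    ∀ (n : ℕ) (f : (Fin n → ZMod r) → Matrix (Fin m) (Fin m) ℂ),
      fourierMass ζ p f ≤ powerMean p f ^ (2 / p)
  | 0, f => (fourierMass_fin_zero hp0.ne' f).le
  | n + 1, f => 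
      fourierMass_le_powerMean_rpow_succ hp0 hp2 hζ base
        (fourierMass_le_powerMean_rpow hp0 hp2 hζ base n) f

theorem matrix_hypercontractivity_induction_general (r m : ℕ) [NeZero r]
    (p : ℝ) (hp1 : 1 ≤ p) (hp2 : p ≤ 2)
    (base : ∀ h : (Fin 1 → ZMod r) → Matrix (Fin m) (Fin m) ℂ,
      ∑ S : Fin 1 → ZMod r, zetaConst r p ^ hammingWt S * schattenNorm p (matFourier h S) ^ 2
        ≤ ((1 / (r : ℝ)) * ∑ x : Fin 1 → ZMod r, schattenNorm p (h x) ^ p) ^ (2 / p)) :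
    ∀ (n : ℕ) (f : (Fin n → ZMod r) → Matrix (Fin m) (Fin m) ℂ),
      ∑ S : Fin n → ZMod r, zetaConst r p ^ hammingWt S * schattenNorm p (matFourier f S) ^ 2
        ≤ ((((r : ℝ) ^ n)⁻¹) * ∑ x : Fin n → ZMod r, schattenNorm p (f x) ^ p) ^ (2 / p) :=
  fourierMass_le_powerMean_rpow (by linarith) hp2 (zetaConst_nonneg r hp1) fun h => by
    rw [powerMean, pow_one, ← one_div]
    exact base h

/-- The matrix-valued hypercontractive inequality over `ℤ_r`: assuming the
one-variable (`n = 1`) case, for all `n` and all `f : (ℤ_r)^n → ℂ^{m×m}`,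
`∑_S ζ^{|S|} ‖f̂(S)‖_p² ≤ (r^{-n} ∑_x ‖f(x)‖_p^p)^{2/p}` where `ζ = ζ_r(p)`. -/
theorem matrix_hypercontractivity_induction (r m : ℕ) [NeZero r] (hr : 2 ≤ r)
    (p : ℝ) (hp1 : 1 ≤ p) (hp2 : p ≤ 2)
    (base : ∀ h : (Fin 1 → ZMod r) → Matrix (Fin m) (Fin m) ℂ,
      ∑ S : Fin 1 → ZMod r, zetaConst r p ^ hammingWt S * schattenNorm p (matFourier h S) ^ 2
        ≤ ((1 / (r : ℝ)) * ∑ x : Fin 1 → ZMod r, schattenNorm p (h x) ^ p) ^ (2 / p)) :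
    ∀ (n : ℕ) (f : (Fin n → ZMod r) → Matrix (Fin m) (Fin m) ℂ),
      ∑ S : Fin n → ZMod r, zetaConst r p ^ hammingWt S * schattenNorm p (matFourier f S) ^ 2
        ≤ ((((r : ℝ) ^ n)⁻¹) * ∑ x : Fin n → ZMod r, schattenNorm p (f x) ^ p) ^ (2 / p) :=
  matrix_hypercontractivity_induction_general r m p hp1 hp2 base
end

section
/- For integers t ≥ 2, k ≥ 1, and r ≥ 2: ∑_{k_1,…,k_{r-1} ≥ 0, ∑ k_j = k} (multinomial(k; k_1,…,k_{r-1}))^2 / multinomial(kt; k_1 t,…,k_{r-1} t) ≤ (r-1)^k, where multinomial(k; k_1,…,k_{r-1}) = k!/(k_1!⋯k_{r-1}!). -/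
/-!
Since multinomial coefficients only grow when every part is scaled by `t ≥ 1`, each summand
`M(k; k⃗)² / M(kt; t k⃗)` is at most `M(k; k⃗)`, and the multinomial theorem sums these to `(r-1)^k`.
-/

open Finset

namespace Nat

theorem choose_mul_choose_le_add_choose (m n i j : ℕ) :
    m.choose i * n.choose j ≤ (m + n).choose (i + j) := by
  rw [add_choose_eq]
  exact single_le_sum (f := fun p : ℕ × ℕ => m.choose p.1 * n.choose p.2)
    (fun _ _ => Nat.zero_le _) (a := (i, j)) (mem_antidiagonal.2 rfl)

theorem add_choose_le_mul_add_mul_choose_mul {t : ℕ} (ht : 1 ≤ t) (a b : ℕ) :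
    (a + b).choose a ≤ (a * t + b * t).choose (a * t) := by
  induction t, ht using Nat.le_induction with
  | base => simp
  | succ t _ ih =>
    have hpos : 0 < (a + b).choose a := choose_pos (Nat.le_add_right a b)
    calc (a + b).choose a
        ≤ (a * t + b * t).choose (a * t) := ih
      _ ≤ (a * t + b * t).choose (a * t) * (a + b).choose a := Nat.le_mul_of_pos_right _ hpos
      _ ≤ (a * t + b * t + (a + b)).choose (a * t + a) := choose_mul_choose_le_add_choose ..
      _ = (a * (t + 1) + b * (t + 1)).choose (a * (t + 1)) := by ring_nf

theorem multinomial_le_multinomial_mul {ι : Type*} (s : Finset ι) (f : ι → ℕ) {t : ℕ}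
    (ht : 1 ≤ t) : multinomial s f ≤ multinomial s (fun i => f i * t) := by
  induction s using Finset.cons_induction with
  | empty => simp
  | cons a s ha ih =>
    rw [multinomial_cons, multinomial_cons, ← sum_mul]
    exact Nat.mul_le_mul (add_choose_le_mul_add_mul_choose_mul ht ..) ih

theorem sum_multinomial_piAntidiag {ι : Type*} [DecidableEq ι] (s : Finset ι) (n : ℕ) :
    ∑ f ∈ piAntidiag s n, multinomial s f = #s ^ n := by
  simpa using (sum_pow_eq_sum_piAntidiag s (fun _ => (1 : ℕ)) n).symm

end Nat

theorem Finset.filter_piFinset_range_sum_eq_piAntidiag_univ {ι : Type*} [Fintype ι]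
    [DecidableEq ι] (n : ℕ) :
    (Fintype.piFinset fun _ : ι => range (n + 1)).filter (fun f => ∑ i, f i = n) =
      piAntidiag univ n := by
  ext f
  simp only [mem_filter, Fintype.mem_piFinset, mem_range, mem_piAntidiag, mem_univ,
    implies_true, and_true, and_iff_right_iff_imp]
  rintro rfl i
  exact Nat.lt_succ_of_le (single_le_sum (fun j _ => Nat.zero_le (f j)) (mem_univ i))

theorem sq_div_le_self_of_le {K : Type*} [Field K] [LinearOrder K] [IsStrictOrderedRing K]
    {a b : K} (ha : 0 ≤ a) (hab : a ≤ b) : a ^ 2 / b ≤ a := by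
  rw [sq, mul_div_assoc]
  exact mul_le_of_le_one_right ha (div_le_one_of_le₀ hab (ha.trans hab))

theorem sum_multinomial_ratio_le_general (r t k : ℕ) (hr : 2 ≤ r) (ht : 2 ≤ t) :
    ∑ kv ∈ (Fintype.piFinset fun _ : Fin (r - 1) => Finset.range (k + 1)).filter
        (fun kv => ∑ j, kv j = k),
      (Nat.multinomial Finset.univ kv : ℝ) ^ 2 /
        (Nat.multinomial Finset.univ (fun j => kv j * t) : ℝ)
      ≤ ((r : ℝ) - 1) ^ k := by
  rw [filter_piFinset_range_sum_eq_piAntidiag_univ]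
  calc _ ≤ ∑ kv ∈ piAntidiag univ k, (Nat.multinomial univ kv : ℝ) :=
        sum_le_sum fun kv _ => sq_div_le_self_of_le (Nat.cast_nonneg _)
          (by exact_mod_cast Nat.multinomial_le_multinomial_mul univ kv (by omega))
    _ = ((r - 1 : ℕ) : ℝ) ^ k := by
        exact_mod_cast (Nat.sum_multinomial_piAntidiag univ k).trans (by simp)
    _ = ((r : ℝ) - 1) ^ k := by rw [Nat.cast_sub (by omega), Nat.cast_one]

/-- `∑_{k_1+⋯+k_{r-1} = k} multinomial(k; k⃗)² / multinomial(kt; t·k⃗) ≤ (r-1)^k`. -/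
theorem sum_multinomial_ratio_le (r t k : ℕ) (hr : 2 ≤ r) (ht : 2 ≤ t) (hk : 1 ≤ k) :
    ∑ kv ∈ (Fintype.piFinset fun _ : Fin (r - 1) => Finset.range (k + 1)).filter
        (fun kv => ∑ j, kv j = k),
      (Nat.multinomial Finset.univ kv : ℝ) ^ 2 /
        (Nat.multinomial Finset.univ (fun j => kv j * t) : ℝ)
      ≤ ((r : ℝ) - 1) ^ k :=
  sum_multinomial_ratio_le_general r t k hr ht
end

section
/- For integers q ≥ 1, 0 ≤ s ≤ q, and ℓ ≥ 2: C(q,s)^2 / C(ℓq, ℓs) ≤ (s/q)^{(ℓ-2)s}, where C denotes the binomial coefficient (interpreting 0^0 = 1). -/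
/-!
Vandermonde's identity gives `C(q,s)^ℓ ≤ C(ℓq, ℓs)`, so the ratio is at most `C(q,s)^{-(ℓ-2)}`;
and comparing `q (s - i) ≤ s (q - i)` factor by factor in `q^s s! ≤ s^s q(q-1)⋯(q-s+1)` gives
the classical bound `(q/s)^s ≤ C(q,s)`.
-/

namespace Nat

theorem choose_mul_choose_le_add_choose_s13 (a b c d : ℕ) :
    a.choose b * c.choose d ≤ (a + c).choose (b + d) := by
  rw [add_choose_eq]
  exact Finset.single_le_sum (f := fun ij : ℕ × ℕ => a.choose ij.1 * c.choose ij.2)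
    (fun _ _ => Nat.zero_le _) (a := (b, d)) (by simp)

theorem choose_pow_le_choose_mul (q s ℓ : ℕ) : q.choose s ^ ℓ ≤ (ℓ * q).choose (ℓ * s) := by
  induction ℓ with
  | zero => simp
  | succ n ih =>
    calc q.choose s ^ (n + 1) = q.choose s ^ n * q.choose s := pow_succ _ _
      _ ≤ (n * q).choose (n * s) * q.choose s := Nat.mul_le_mul_right _ ih
      _ ≤ (n * q + q).choose (n * s + s) := choose_mul_choose_le_add_choose_s13 _ _ _ _
      _ = ((n + 1) * q).choose ((n + 1) * s) := by ring_nf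

theorem pow_mul_descFactorial_le {q s : ℕ} (hs : s ≤ q) (k : ℕ) :
    q ^ k * s.descFactorial k ≤ s ^ k * q.descFactorial k := by
  rw [descFactorial_eq_prod_range, descFactorial_eq_prod_range, ← Finset.card_range k,
    ← Finset.prod_const, ← Finset.prod_const, Finset.card_range, ← Finset.prod_mul_distrib,
    ← Finset.prod_mul_distrib]
  refine Finset.prod_le_prod' fun i _ => ?_
  rw [Nat.mul_sub, Nat.mul_sub, Nat.mul_comm s q]
  exact Nat.sub_le_sub_left (Nat.mul_le_mul_right i hs) _

theorem pow_le_choose_mul_pow {q s : ℕ} (hs : s ≤ q) : q ^ s ≤ q.choose s * s ^ s := by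
  have h := pow_mul_descFactorial_le hs s
  rw [descFactorial_self, descFactorial_eq_factorial_mul_choose] at h
  refine Nat.le_of_mul_le_mul_right ?_ (factorial_pos s)
  linarith

variable {α : Type*} [Semifield α] [LinearOrder α] [IsStrictOrderedRing α]

theorem inv_choose_le_div_pow {q s : ℕ} (hs : s ≤ q) :
    (q.choose s : α)⁻¹ ≤ ((s : α) / q) ^ s := by
  rcases Nat.eq_zero_or_pos s with rfl | hs₀
  · simp
  have hq₀ : (0 : α) < q := by exact_mod_cast hs₀.trans_le hs
  have hchoose : (0 : α) < q.choose s := by exact_mod_cast choose_pos hs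
  rw [div_pow, ← inv_div, inv_le_inv₀ hchoose (by positivity), div_le_iff₀ (by positivity)]
  exact_mod_cast pow_le_choose_mul_pow hs

end Nat

theorem choose_sq_ratio_le_general (q s ℓ : ℕ) (hs : s ≤ q) (hℓ : 2 ≤ ℓ) :
    ((q.choose s : ℝ)) ^ 2 / ((ℓ * q).choose (ℓ * s) : ℝ)
      ≤ ((s : ℝ) / (q : ℝ)) ^ ((ℓ - 2) * s) := by
  obtain ⟨m, rfl⟩ := Nat.exists_eq_add_of_le hℓ
  have hc : (0 : ℝ) < q.choose s := by exact_mod_cast Nat.choose_pos hs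
  have hpow : (q.choose s : ℝ) ^ (2 + m) ≤ ((2 + m) * q).choose ((2 + m) * s) := by
    exact_mod_cast Nat.choose_pow_le_choose_mul q s (2 + m)
  calc (q.choose s : ℝ) ^ 2 / ((2 + m) * q).choose ((2 + m) * s)
      ≤ (q.choose s : ℝ) ^ 2 / (q.choose s : ℝ) ^ (2 + m) :=
        div_le_div_of_nonneg_left (by positivity) (by positivity) hpow
    _ = (q.choose s : ℝ)⁻¹ ^ m := by
        rw [pow_add, div_mul_cancel_left₀ (by positivity), inv_pow]
    _ ≤ (((s : ℝ) / q) ^ s) ^ m :=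
        pow_le_pow_left₀ (by positivity) (Nat.inv_choose_le_div_pow hs) m
    _ = ((s : ℝ) / q) ^ ((2 + m - 2) * s) := by
        rw [Nat.add_sub_cancel_left, ← pow_mul, Nat.mul_comm]

/-- For integers `q ≥ 1`, `0 ≤ s ≤ q` and `ℓ ≥ 2`:
`C(q,s)² / C(ℓq, ℓs) ≤ (s/q)^{(ℓ-2)s}` (with the convention `0^0 = 1`). -/
theorem choose_sq_ratio_le (q s ℓ : ℕ) (hq : 1 ≤ q) (hs : s ≤ q) (hℓ : 2 ≤ ℓ) :
    ((q.choose s : ℝ)) ^ 2 / ((ℓ * q).choose (ℓ * s) : ℝ)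
      ≤ ((s : ℝ) / (q : ℝ)) ^ ((ℓ - 2) * s) :=
  choose_sq_ratio_le_general q s ℓ hs hℓ
end

section
/- For integers q ≥ 1, 0 ≤ s ≤ q, and ℓ ≥ 1: C(q,s) / C(ℓq, ℓs) ≤ (s/q)^{(ℓ-1)s} (interpreting 0^0 = 1). -/
/-!
Vandermonde's identity gives `C(q, s) · C((ℓ-1)q, (ℓ-1)s) ≤ C(ℓq, ℓs)`, and the classical
bound `C(n, k) ≥ (n / k) ^ k` bounds the second factor below by `(q / s) ^ ((ℓ-1)s)`.
-/

open Finset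

namespace Nat

theorem pow_le_choose_mul_pow_s14 {n k : ℕ} (hkn : k ≤ n) : n ^ k ≤ n.choose k * k ^ k := by
  -- Factor by factor, `n / k ≤ (n - i) / (k - i)` for `i < k`.
  have hprod : n ^ k * k ! ≤ n.descFactorial k * k ^ k := by
    have hconst (c : ℕ) : c ^ k = ∏ _i ∈ range k, c := by simp
    rw [← descFactorial_self, descFactorial_eq_prod_range, descFactorial_eq_prod_range,
      hconst n, hconst k, ← prod_mul_distrib, ← prod_mul_distrib]
    refine prod_le_prod' fun i hi => ?_
    have hik : i < k := mem_range.mp hi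
    have hsplit : n * (k - i) + n * i = (n - i) * k + i * k := by
      zify [hik.le, hik.le.trans hkn]; ring
    nlinarith [hsplit, Nat.mul_le_mul_left i hkn]
  rw [descFactorial_eq_factorial_mul_choose] at hprod
  exact Nat.le_of_mul_le_mul_right (by linarith) (factorial_pos k)

theorem choose_mul_choose_le_add_choose_add (m n a b : ℕ) :
    m.choose a * n.choose b ≤ (m + n).choose (a + b) := by
  rw [add_choose_eq]
  exact single_le_sum (f := fun ij : ℕ × ℕ => m.choose ij.1 * n.choose ij.2)
    (fun _ _ => Nat.zero_le _) (a := (a, b)) (mem_antidiagonal.mpr rfl)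

theorem pow_mul_choose_le_pow_mul_choose_mul {q s : ℕ} (hs : s ≤ q) (m : ℕ) :
    q ^ (m * s) * q.choose s ≤ s ^ (m * s) * ((m + 1) * q).choose ((m + 1) * s) := by
  have hm : 0 < m ^ (m * s) := by rcases m with _ | m <;> simp
  have hpow : q ^ (m * s) ≤ s ^ (m * s) * (m * q).choose (m * s) := by
    refine Nat.le_of_mul_le_mul_left ?_ hm
    calc m ^ (m * s) * q ^ (m * s) = (m * q) ^ (m * s) := (mul_pow ..).symm
      _ ≤ (m * q).choose (m * s) * (m * s) ^ (m * s) :=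
        pow_le_choose_mul_pow_s14 (Nat.mul_le_mul_left m hs)
      _ = m ^ (m * s) * (s ^ (m * s) * (m * q).choose (m * s)) := by rw [mul_pow]; ring
  calc q ^ (m * s) * q.choose s ≤ s ^ (m * s) * ((m * q).choose (m * s) * q.choose s) := by
        rw [← mul_assoc]; exact Nat.mul_le_mul_right _ hpow
    _ ≤ s ^ (m * s) * ((m + 1) * q).choose ((m + 1) * s) := by
        rw [add_one_mul, add_one_mul]
        exact Nat.mul_le_mul_left _ (choose_mul_choose_le_add_choose_add ..)

end Nat

/-- For integers `q ≥ 1`, `0 ≤ s ≤ q` and `ℓ ≥ 1`: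
`C(q,s) / C(ℓq, ℓs) ≤ (s/q)^{(ℓ-1)s}` (with the convention `0^0 = 1`). -/
theorem choose_ratio_le (q s ℓ : ℕ) (hq : 1 ≤ q) (hs : s ≤ q) (hℓ : 1 ≤ ℓ) :
    ((q.choose s : ℝ)) / ((ℓ * q).choose (ℓ * s) : ℝ)
      ≤ ((s : ℝ) / (q : ℝ)) ^ ((ℓ - 1) * s) := by
  obtain ⟨m, rfl⟩ : ∃ m, ℓ = m + 1 := ⟨ℓ - 1, by omega⟩
  have hC : (0 : ℝ) < ((m + 1) * q).choose ((m + 1) * s) :=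
    mod_cast Nat.choose_pos (Nat.mul_le_mul_left _ hs)
  have hQ : (0 : ℝ) < (q : ℝ) ^ (m * s) := pow_pos (mod_cast hq) _
  rw [Nat.add_sub_cancel, div_pow, div_le_div_iff₀ hC hQ, mul_comm]
  exact_mod_cast Nat.pow_mul_choose_le_pow_mul_choose_mul hs m
end

section
/- Let n, t ≥ 2 with t | n and α ∈ (0, 1/2]. If α√(r-1) ≤ 1, then the function g(k) = α^k (r-1)^{k/2} C(n/t, k) / √(C(n, kt)) is nonincreasing for integer k in the range 1 ≤ k ≤ αn/t; concretely, g(k-1) ≥ g(k) for all such k, which follows from C(n/t, k-1)√(C(n,kt)) ≥ C(n/t, k)√(C(n, kt-t)) when kt ≤ n/2. -/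
open Finset

/-- Falling-factorial identity: `C(n,a)·a(a-1)⋯(a-t+1) = C(n,a-t)·(b+t)(b+t-1)⋯(b+1)`
where `n = a + b`. -/
private lemma choose_falling_ident (a b : ℕ) : ∀ t : ℕ, t ≤ a →
    (a + b).choose (a - t) * ∏ j ∈ range t, (b + j + 1) =
      (a + b).choose a * ∏ j ∈ range t, (a - j) := by
  intro t
  induction t with
  | zero => simp
  | succ t ih =>
    intro ht
    have h1 : t ≤ a := by omega
    rw [prod_range_succ, prod_range_succ]
    have h2 : (a + b).choose (a - t) * (a - t) = (a + b).choose (a - (t+1)) * (b + t + 1) := by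
      have := Nat.choose_succ_right_eq (a + b) (a - t - 1)
      have e1 : a - t - 1 + 1 = a - t := by omega
      have e2 : a + b - (a - t - 1) = b + t + 1 := by omega
      have e3 : a - t - 1 = a - (t + 1) := by omega
      rw [e1, e2, e3] at this
      omega
    calc (a + b).choose (a - (t+1)) * ((∏ j ∈ range t, (b + j + 1)) * (b + t + 1))
        = ((a + b).choose (a - (t+1)) * (b + t + 1)) * ∏ j ∈ range t, (b + j + 1) := by ring
      _ = ((a + b).choose (a - t) * (a - t)) * ∏ j ∈ range t, (b + j + 1) := by rw [h2]
      _ = ((a + b).choose (a - t) * ∏ j ∈ range t, (b + j + 1)) * (a - t) := by ring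
      _ = ((a + b).choose a * ∏ j ∈ range t, (a - j)) * (a - t) := by rw [ih h1]
      _ = (a + b).choose a * ((∏ j ∈ range t, (a - j)) * (a - t)) := by ring

/-- Product comparison: `(b+s+2)·(a-1)(a-2)⋯(a-s-1) ≤ (b+1)(b+2)⋯(b+s+1)·a` for `a ≤ b`. -/
private lemma prod_pairing (b : ℕ) : ∀ s a : ℕ, a ≤ b → s + 2 ≤ a →
    (b + s + 2) * ∏ j ∈ range (s + 1), (a - (j + 1)) ≤
      (∏ j ∈ range (s + 1), (b + j + 1)) * a := by
  intro s
  induction s with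
  | zero =>
    intro a hab h2
    rw [prod_range_one, prod_range_one]
    obtain ⟨c, rfl⟩ : ∃ c, a = c + 2 := ⟨a - 2, by omega⟩
    have h : c + 2 - (0 + 1) = c + 1 := by omega
    rw [h]
    nlinarith
  | succ s ih =>
    intro a hab h2
    have hih := ih a hab (by omega)
    have pa : ∏ j ∈ range (s + 1 + 1), (a - (j + 1)) =
        (∏ j ∈ range (s + 1), (a - (j + 1))) * (a - s - 2) := by
      rw [prod_range_succ]; congr 1
    have pb : ∏ j ∈ range (s + 1 + 1), (b + j + 1) =
        (∏ j ∈ range (s + 1), (b + j + 1)) * (b + s + 2) := by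
      rw [prod_range_succ]; congr 1
    rw [pa, pb]
    have key : (b + (s+1) + 2) * (a - s - 2) ≤ (b + s + 2) * (b + s + 2) := by
      have : a - s - 2 + (s + 2) ≤ b + s + 2 := by omega
      nlinarith
    calc (b + (s+1) + 2) * ((∏ j ∈ range (s+1), (a - (j+1))) * (a - s - 2))
        = ((b + (s+1) + 2) * (a - s - 2)) * ∏ j ∈ range (s+1), (a - (j+1)) := by ring
      _ ≤ ((b + s + 2) * (b + s + 2)) * ∏ j ∈ range (s+1), (a - (j+1)) :=
          Nat.mul_le_mul_right _ key
      _ = (b + s + 2) * ((b + s + 2) * ∏ j ∈ range (s+1), (a - (j+1))) := by ring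
      _ ≤ (b + s + 2) * ((∏ j ∈ range (s+1), (b + j + 1)) * a) :=
          Nat.mul_le_mul_left _ hih
      _ = ((∏ j ∈ range (s+1), (b + j + 1)) * (b + s + 2)) * a := by ring

/-- `C(n,a-t)·(b+t)² ≤ C(n,a)·a²` where `n = a + b`, `a ≤ b`, `2 ≤ t ≤ a`. -/
private lemma choose_sq_ineq (a b t : ℕ) (hab : a ≤ b) (ht2 : 2 ≤ t) (hta : t ≤ a) :
    (a + b).choose (a - t) * (b + t) ^ 2 ≤ (a + b).choose a * a ^ 2 := by
  obtain ⟨s, rfl⟩ : ∃ s, t = s + 2 := ⟨t - 2, by omega⟩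
  set P := ∏ j ∈ range (s + 1), (b + j + 1) with hP
  set Q := ∏ j ∈ range (s + 1), (a - (j + 1)) with hQ
  have hQpos : 0 < Q := by
    apply Finset.prod_pos
    intro j hj
    have := Finset.mem_range.mp hj
    omega
  have hident := choose_falling_ident a b (s + 2) hta
  have ea : ∏ j ∈ range (s + 2), (a - j) = Q * a := by
    rw [prod_range_succ']
    simp [hQ, mul_comm]
  have eb : ∏ j ∈ range (s + 2), (b + j + 1) = P * (b + s + 2) := by
    rw [prod_range_succ]; rw [hP]; ring_nf
  rw [ea, eb] at hident
  -- hident : C (a-t) * (P * (b+s+2)) = C a * (Q * a)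
  have hpair := prod_pairing b s a hab hta
  -- hpair : (b+s+2) * Q ≤ P * a
  have main : ((a + b).choose (a - (s+2)) * (b + (s+2)) ^ 2) * Q ≤
      ((a + b).choose a * a ^ 2) * Q := by
    calc ((a + b).choose (a - (s+2)) * (b + (s+2)) ^ 2) * Q
        = ((a + b).choose (a - (s+2)) * (b + s + 2)) * ((b + s + 2) * Q) := by ring
      _ ≤ ((a + b).choose (a - (s+2)) * (b + s + 2)) * (P * a) :=
          Nat.mul_le_mul_left _ hpair
      _ = ((a + b).choose (a - (s+2)) * (P * (b + s + 2))) * a := by ring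
      _ = ((a + b).choose a * (Q * a)) * a := by rw [hident]
      _ = ((a + b).choose a * a ^ 2) * Q := by ring
  exact Nat.le_of_mul_le_mul_right main hQpos

/-- The key squared inequality: `C(m,k)²·C(n,kt-t) ≤ C(m,k-1)²·C(n,kt)` for `m = n/t`. -/
private lemma key_nat (n t k : ℕ) (ht : 2 ≤ t) (hdvd : t ∣ n) (hk : 1 ≤ k)
    (h2 : 2 * (k * t) ≤ n) :
    ((n / t).choose k) ^ 2 * n.choose (k * t - t) ≤
      ((n / t).choose (k - 1)) ^ 2 * n.choose (k * t) := by
  set m := n / t with hm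
  have hmt : m * t = n := Nat.div_mul_cancel hdvd
  set a := k * t with ha
  set b := n - a with hb
  have hab : a ≤ b := by omega
  have hta : t ≤ a := by
    calc t = 1 * t := (one_mul t).symm
      _ ≤ k * t := Nat.mul_le_mul_right t hk
  have hn : a + b = n := by omega
  have hC := choose_sq_ineq a b t hab ht hta
  rw [hn] at hC
  -- relate C(m,k)·a with C(m,k-1)·(b+t)
  have hkm : k ≤ m := (Nat.le_div_iff_mul_le (by omega)).mpr (by omega)
  have hck : m.choose k * a = m.choose (k - 1) * (b + t) := by
    have hcs := Nat.choose_succ_right_eq m (k - 1)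
    have e1 : k - 1 + 1 = k := by omega
    rw [e1] at hcs
    -- hcs : m.choose k * k = m.choose (k-1) * (m - (k-1))
    have e2 : (m - (k - 1)) * t = b + t := by
      have : (m - (k - 1)) * t = m * t - (k - 1) * t := Nat.sub_mul _ _ _
      have e3 : (k - 1) * t = k * t - t := by
        rw [Nat.sub_mul, one_mul]
      omega
    calc m.choose k * a = (m.choose k * k) * t := by rw [ha]; ring
      _ = (m.choose (k - 1) * (m - (k - 1))) * t := by rw [hcs]
      _ = m.choose (k - 1) * ((m - (k - 1)) * t) := by ring
      _ = m.choose (k - 1) * (b + t) := by rw [e2]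
  have hapos : 0 < a := by omega
  have main : ((m.choose k) ^ 2 * n.choose (a - t)) * a ^ 2 ≤
      ((m.choose (k - 1)) ^ 2 * n.choose a) * a ^ 2 := by
    calc ((m.choose k) ^ 2 * n.choose (a - t)) * a ^ 2
        = (m.choose k * a) * (m.choose k * a) * n.choose (a - t) := by ring
      _ = (m.choose (k - 1)) ^ 2 * (n.choose (a - t) * (b + t) ^ 2) := by rw [hck]; ring
      _ ≤ (m.choose (k - 1)) ^ 2 * (n.choose a * a ^ 2) :=
          Nat.mul_le_mul_left _ hC
      _ = ((m.choose (k - 1)) ^ 2 * n.choose a) * a ^ 2 := by ring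
  exact Nat.le_of_mul_le_mul_right main (by positivity)

/-- Monotonicity of `g(k) = α^k (r-1)^{k/2} C(n/t,k)/√C(n,kt)`: for `t ∣ n`,
`0 < α ≤ 1/2` with `α√(r-1) ≤ 1`, the function `g` is nonincreasing for
integers `1 ≤ k ≤ αn/t`. -/
theorem g_antitone (r t n : ℕ) (hr : 2 ≤ r) (ht : 2 ≤ t) (hdvd : t ∣ n)
    (α : ℝ) (hα0 : 0 < α) (hα : α ≤ 1 / 2)
    (hαr : α * Real.sqrt ((r : ℝ) - 1) ≤ 1) :
    ∀ k : ℕ, 1 ≤ k → (k : ℝ) ≤ α * n / t →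
      α ^ k * ((r : ℝ) - 1) ^ ((k : ℝ) / 2) * ((n / t).choose k : ℝ) /
          Real.sqrt (n.choose (k * t) : ℝ)
        ≤ α ^ (k - 1) * ((r : ℝ) - 1) ^ (((k : ℝ) - 1) / 2) * ((n / t).choose (k - 1) : ℝ) /
            Real.sqrt (n.choose ((k - 1) * t) : ℝ) := by
  intro k hk hkle
  have ht0 : 0 < t := by omega
  have hr1 : (1 : ℝ) ≤ (r : ℝ) - 1 := by
    have : (2 : ℝ) ≤ (r : ℝ) := by exact_mod_cast hr
    linarith
  have hr0 : (0 : ℝ) < (r : ℝ) - 1 := by linarith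
  -- 2 k t ≤ n
  have h2 : 2 * (k * t) ≤ n := by
    have htR : (0 : ℝ) < (t : ℝ) := by exact_mod_cast ht0
    rw [le_div_iff₀ htR] at hkle
    have hn0 : (0 : ℝ) ≤ (n : ℝ) := Nat.cast_nonneg n
    have hR : (2 : ℝ) * (k * t) ≤ (n : ℝ) := by nlinarith
    exact_mod_cast hR
  have hktn : k * t ≤ n := by omega
  have htkt : t ≤ k * t := by
    calc t = 1 * t := (one_mul t).symm
      _ ≤ k * t := Nat.mul_le_mul_right t hk
  have hkt' : (k - 1) * t = k * t - t := by
    rw [Nat.sub_mul, one_mul]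
  have hCa : (0 : ℝ) < (n.choose (k * t) : ℝ) := by
    exact_mod_cast Nat.choose_pos hktn
  have hCat : (0 : ℝ) < (n.choose ((k - 1) * t) : ℝ) := by
    exact_mod_cast Nat.choose_pos (by omega : (k - 1) * t ≤ n)
  have hsa : (0 : ℝ) < Real.sqrt (n.choose (k * t) : ℝ) := Real.sqrt_pos.mpr hCa
  have hsat : (0 : ℝ) < Real.sqrt (n.choose ((k - 1) * t) : ℝ) := Real.sqrt_pos.mpr hCat
  -- key ratio inequality
  have hkey : ((n / t).choose k : ℝ) / Real.sqrt (n.choose (k * t) : ℝ) ≤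
      ((n / t).choose (k - 1) : ℝ) / Real.sqrt (n.choose ((k - 1) * t) : ℝ) := by
    rw [div_le_div_iff₀ hsa hsat]
    have hnat := key_nat n t k ht hdvd hk h2
    rw [← hkt'] at hnat
    calc ((n / t).choose k : ℝ) * Real.sqrt (n.choose ((k - 1) * t) : ℝ)
        = Real.sqrt (((n / t).choose k : ℝ) ^ 2 * (n.choose ((k - 1) * t) : ℝ)) := by
          rw [Real.sqrt_mul (by positivity), Real.sqrt_sq (by positivity)]
      _ ≤ Real.sqrt (((n / t).choose (k - 1) : ℝ) ^ 2 * (n.choose (k * t) : ℝ)) := by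
          apply Real.sqrt_le_sqrt
          exact_mod_cast hnat
      _ = ((n / t).choose (k - 1) : ℝ) * Real.sqrt (n.choose (k * t) : ℝ) := by
          rw [Real.sqrt_mul (by positivity), Real.sqrt_sq (by positivity)]
  -- split the coefficient
  have hksub : ((k : ℝ) - 1) = ((k - 1 : ℕ) : ℝ) := by
    rw [Nat.cast_sub hk]; norm_num
  have hαk : α ^ k = α ^ (k - 1) * α := by
    conv_lhs => rw [show k = (k - 1) + 1 by omega]
    rw [pow_succ]
  have hrk : ((r : ℝ) - 1) ^ ((k : ℝ) / 2) =
      ((r : ℝ) - 1) ^ (((k : ℝ) - 1) / 2) * Real.sqrt ((r : ℝ) - 1) := by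
    rw [Real.sqrt_eq_rpow, ← Real.rpow_add hr0]
    congr 1
    ring
  set B := α ^ (k - 1) * ((r : ℝ) - 1) ^ (((k : ℝ) - 1) / 2) with hB
  have hBpos : 0 < B := by
    apply mul_pos (pow_pos hα0 _) (Real.rpow_pos_of_pos hr0 _)
  have h1 : α * Real.sqrt ((r : ℝ) - 1) *
      (((n / t).choose k : ℝ) / Real.sqrt (n.choose (k * t) : ℝ)) ≤
      ((n / t).choose (k - 1) : ℝ) / Real.sqrt (n.choose ((k - 1) * t) : ℝ) := by
    calc α * Real.sqrt ((r : ℝ) - 1) *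
        (((n / t).choose k : ℝ) / Real.sqrt (n.choose (k * t) : ℝ))
        ≤ 1 * (((n / t).choose k : ℝ) / Real.sqrt (n.choose (k * t) : ℝ)) := by
          apply mul_le_mul_of_nonneg_right hαr (by positivity)
      _ = ((n / t).choose k : ℝ) / Real.sqrt (n.choose (k * t) : ℝ) := one_mul _
      _ ≤ _ := hkey
  have h2' := mul_le_mul_of_nonneg_left h1 hBpos.le
  calc α ^ k * ((r : ℝ) - 1) ^ ((k : ℝ) / 2) * ((n / t).choose k : ℝ) /
        Real.sqrt (n.choose (k * t) : ℝ)
      = B * (α * Real.sqrt ((r : ℝ) - 1) *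
          (((n / t).choose k : ℝ) / Real.sqrt (n.choose (k * t) : ℝ))) := by
        rw [hαk, hrk, hB]; ring
    _ ≤ B * (((n / t).choose (k - 1) : ℝ) / Real.sqrt (n.choose ((k - 1) * t) : ℝ)) := h2'
    _ = α ^ (k - 1) * ((r : ℝ) - 1) ^ (((k : ℝ) - 1) / 2) * ((n / t).choose (k - 1) : ℝ) /
          Real.sqrt (n.choose ((k - 1) * t) : ℝ) := by
        rw [hB]; ring
end

section
/- In the quantum protocol for r-ary Hidden Matching: let r ≥ 2, ω = e^{2πi/r}, and let x_0, x_1, ℓ ∈ Z_r with ℓ ≠ x_0 + x_1 (mod r). For the state obtained by the protocol, the probability of measuring outcome m ∈ Z_r is Pr[m] = |r^{-1} ∑_{k even, 0≤k<r} ω^{k(ℓ-m)}|^2 + |r^{-1} ∑_{k odd, 0≤k<r} ω^{k(ℓ-m)}|^2, and this is maximized at m = ℓ, where it equals 1/2 if r is even and 1/2 + 1/(2r²) if r is odd. -/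
/-!
At `m = ℓ` every term `ω ^ (k * 0)` is `1`, so both parity sums reach their trivial bound
`‖∑_{k ∈ s} ω ^ (k d)‖ ≤ #s`, the number of even resp. odd `k < r`, namely `⌈r/2⌉` and `⌊r/2⌋`.
Hence the maximum is `(⌈r/2⌉² + ⌊r/2⌋²) / r²`, which is `1/2` or `1/2 + 1/(2r²)` by parity of `r`.
-/

open Finset

lemma card_filter_even_range (n : ℕ) : #{k ∈ range n | Even k} = (n + 1) / 2 := by
  induction n with
  | zero => simp
  | succ n ih =>
    rw [range_add_one, filter_insert]
    by_cases h : Even n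
    · rw [if_pos h, card_insert_of_notMem (by simp), ih]
      obtain ⟨t, ht⟩ := h
      omega
    · rw [if_neg h, ih]
      rw [Nat.not_even_iff] at h
      omega

lemma card_filter_not_even_range (n : ℕ) : #{k ∈ range n | ¬Even k} = n / 2 := by
  have h := card_filter_add_card_filter_not (s := range n) (p := fun k => Even k)
  rw [card_range, card_filter_even_range] at h
  omega

lemma ceil_half_sq_add_floor_half_sq_div_sq {n : ℕ} (hn : n ≠ 0) :
    ((((n + 1) / 2 : ℕ) : ℝ) ^ 2 + ((n / 2 : ℕ) : ℝ) ^ 2) / (n : ℝ) ^ 2 =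
      if Even n then 1 / 2 else 1 / 2 + 1 / (2 * (n : ℝ) ^ 2) := by
  have hn' : (n : ℝ) ≠ 0 := Nat.cast_ne_zero.mpr hn
  rcases Nat.even_or_odd' n with ⟨t, rfl | rfl⟩
  · rw [if_pos (even_two_mul t), show (2 * t + 1) / 2 = t by omega,
      show 2 * t / 2 = t by omega]
    field_simp
    push_cast
    ring
  · rw [if_neg (Nat.not_even_iff_odd.mpr (odd_two_mul_add_one t)),
      show (2 * t + 1 + 1) / 2 = t + 1 by omega, show (2 * t + 1) / 2 = t by omega]
    field_simp
    push_cast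
    ring

lemma norm_sum_pow_le_card {z : ℂ} (hz : ‖z‖ = 1) (s : Finset ℕ) (e : ℕ → ℕ) :
    ‖∑ k ∈ s, z ^ e k‖ ≤ #s :=
  calc ‖∑ k ∈ s, z ^ e k‖ ≤ ∑ k ∈ s, ‖z ^ e k‖ := norm_sum_le _ _
    _ = #s := by simp [hz]

/-- `Pr[m]` of the protocol as a function of `d = (ℓ - m).val`. -/
noncomputable def parityProb (n : ℕ) (z : ℂ) (d : ℕ) : ℝ :=
  ‖(n : ℂ)⁻¹ * ∑ k ∈ range n with Even k, z ^ (k * d)‖ ^ 2 +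
    ‖(n : ℂ)⁻¹ * ∑ k ∈ range n with ¬Even k, z ^ (k * d)‖ ^ 2

lemma parityProb_zero (n : ℕ) (z : ℂ) :
    parityProb n z 0 = ((((n + 1) / 2 : ℕ) : ℝ) ^ 2 + ((n / 2 : ℕ) : ℝ) ^ 2) / (n : ℝ) ^ 2 := by
  simp only [parityProb, mul_zero, pow_zero, sum_const, nsmul_eq_mul, mul_one,
    card_filter_even_range, card_filter_not_even_range, norm_mul, norm_inv, Complex.norm_natCast]
  ring

lemma parityProb_le_parityProb_zero (n : ℕ) {z : ℂ} (hz : ‖z‖ = 1) (d : ℕ) :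
    parityProb n z d ≤ parityProb n z 0 := by
  simp only [parityProb, mul_zero, pow_zero, sum_const, nsmul_eq_mul, mul_one, norm_mul,
    Complex.norm_natCast]
  gcongr <;> exact norm_sum_pow_le_card hz _ _

theorem hidden_matching_measurement_prob_general (r : ℕ) [NeZero r]
    (ℓ : ZMod r)
    (P : ZMod r → ℝ)
    (hP : ∀ m : ZMod r, P m =
      ‖(r : ℂ)⁻¹ * ∑ k ∈ (Finset.range r).filter (fun k => Even k),
          Complex.exp (2 * Real.pi * Complex.I / r) ^ (k * (ℓ - m).val)‖ ^ 2 +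
      ‖(r : ℂ)⁻¹ * ∑ k ∈ (Finset.range r).filter (fun k => ¬ Even k),
          Complex.exp (2 * Real.pi * Complex.I / r) ^ (k * (ℓ - m).val)‖ ^ 2) :
    (∀ m : ZMod r, P m ≤ P ℓ) ∧
    P ℓ = (if Even r then (1 : ℝ) / 2 else 1 / 2 + 1 / (2 * (r : ℝ) ^ 2)) := by
  have hω : ‖Complex.exp (2 * Real.pi * Complex.I / r)‖ = 1 :=
    (Complex.isPrimitiveRoot_exp r (NeZero.ne r)).norm'_eq_one (NeZero.ne r)
  have hPℓ : P ℓ = parityProb r (Complex.exp (2 * Real.pi * Complex.I / r)) 0 := by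
    rw [hP, sub_self, ZMod.val_zero]
    rfl
  refine ⟨fun m => ?_, ?_⟩
  · rw [hPℓ, hP m]
    exact parityProb_le_parityProb_zero r hω _
  · rw [hPℓ, parityProb_zero, ceil_half_sq_add_floor_half_sq_div_sq (NeZero.ne r)]

/-- In the quantum protocol for `r`-ary Hidden Matching with `ℓ ≠ x₀ + x₁`:
the outcome probability
`Pr[m] = |r⁻¹ ∑_{k even} ω^{k(ℓ-m)}|² + |r⁻¹ ∑_{k odd} ω^{k(ℓ-m)}|²`
is maximized at `m = ℓ`, where it equals `1/2` for even `r` and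
`1/2 + 1/(2r²)` for odd `r`. -/
theorem hidden_matching_measurement_prob (r : ℕ) [NeZero r] (hr : 2 ≤ r)
    (x₀ x₁ ℓ : ZMod r) (hℓ : ℓ ≠ x₀ + x₁)
    (P : ZMod r → ℝ)
    (hP : ∀ m : ZMod r, P m =
      ‖(r : ℂ)⁻¹ * ∑ k ∈ (Finset.range r).filter (fun k => Even k),
          Complex.exp (2 * Real.pi * Complex.I / r) ^ (k * (ℓ - m).val)‖ ^ 2 +
      ‖(r : ℂ)⁻¹ * ∑ k ∈ (Finset.range r).filter (fun k => ¬ Even k),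
          Complex.exp (2 * Real.pi * Complex.I / r) ^ (k * (ℓ - m).val)‖ ^ 2) :
    (∀ m : ZMod r, P m ≤ P ℓ) ∧
    P ℓ = (if Even r then (1 : ℝ) / 2 else 1 / 2 + 1 / (2 * (r : ℝ) ^ 2)) :=
  hidden_matching_measurement_prob_general r ℓ P hP
end
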